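/- Let p > 0 and b > 0. There exists a constant c_{b,p} > 0, depending only on p and b, such that for every a > 0 and every x ∈ ℝ with a + x ≥ 0: if p ≤ 1 then (a+x)^{1+p} − b(a+x)^p ≤ a^{1+p} + (1+p)a^p x − (b/2)a^p + c_{b,p}(|x|^{1+p} + 1), and if p > 1 then (a+x)^{1+p} − b(a+x)^p ≤ a^{1+p} + (1+p)a^p x − (b/2)a^p + a^p + c_{b,p}(|x|^{2p} + 1). -/

import Mathlib

/-!
Write `y = a + x`. The tangent line of the convex function `t ↦ t ^ (1 + p)` at `y` bounds
`y ^ (1 + p) - a ^ (1 + p) - (1 + p) a ^ p x` by `(1 + p) (y ^ p - a ^ p) x`.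

For `p ≤ 1`, the estimate `|u ^ p - v ^ p| ≤ |u - v| ^ p` bounds this by `(1 + p) |x| ^ (1 + p)`
and gives `a ^ p ≤ y ^ p + |x| ^ p`, which handles the `b`-term.

For `p > 1`, put `d = 2 ^ (-1/p)`. If `|x| ≤ (1 - d) a`, then `y ≥ d a`, so `y ^ p ≥ a ^ p / 2`
absorbs the `b`-term, while `(y ^ p - a ^ p) x ≤ p (2a) ^ (p - 1) x ^ 2` and the Young-type
bound `u ^ (p - 1) v ≤ u ^ p + v ^ p` give `a ^ p + C |x| ^ (2p)`. Otherwise `a ≤ |x| / (1 - d)`,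
and every term is bounded by a power of `|x|`.
-/

open Real

section RpowInequalities

variable {p q u v : ℝ}

lemma rpow_sub_rpow_le_mul_sub (hq : 1 ≤ q) (hu : 0 < u) (hv : 0 ≤ v) :
    u ^ q - v ^ q ≤ q * u ^ (q - 1) * (u - v) := by
  have bernoulli := one_add_mul_self_le_rpow_one_add
    (by linarith [div_nonneg hv hu.le] : (-1 : ℝ) ≤ v / u - 1) hq
  rw [add_sub_cancel, div_rpow hv hu.le, le_div_iff₀ (rpow_pos_of_pos hu q)] at bernoulli
  have hsplit : u ^ q = u ^ (q - 1) * u := by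
    rw [rpow_sub_one hu.ne', div_mul_cancel₀ _ hu.ne']
  have : (1 + q * (v / u - 1)) * u ^ q = u ^ q + q * u ^ (q - 1) * (v - u) := by
    rw [hsplit]; field_simp
  linarith

lemma rpow_one_add_sub_rpow_one_add_le (hp : 0 < p) (hu : 0 ≤ u) (hv : 0 ≤ v) :
    u ^ (1 + p) - v ^ (1 + p) ≤ (1 + p) * u ^ p * (u - v) := by
  rcases hu.eq_or_lt with rfl | hu
  · simp [zero_rpow (by linarith : 1 + p ≠ 0), zero_rpow hp.ne', rpow_nonneg hv]
  · simpa using rpow_sub_rpow_le_mul_sub (by linarith : 1 ≤ 1 + p) hu hv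

lemma rpow_sub_rpow_mul_sub_le (hq : 1 ≤ q) (hu : 0 ≤ u) (hv : 0 < v) :
    (u ^ q - v ^ q) * (u - v) ≤ q * max u v ^ (q - 1) * (u - v) ^ 2 := by
  rcases le_total v u with hvu | huv
  · have := rpow_sub_rpow_le_mul_sub hq (hv.trans_le hvu) hv.le
    rw [max_eq_left hvu]
    nlinarith
  · have := rpow_sub_rpow_le_mul_sub hq hv hu
    rw [max_eq_right huv]
    nlinarith

lemma rpow_sub_one_mul_le_rpow_add_rpow (hp : 1 ≤ p) (hu : 0 ≤ u) (hv : 0 ≤ v) :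
    u ^ (p - 1) * v ≤ u ^ p + v ^ p := by
  have hsplit (w : ℝ) (hw : 0 ≤ w) : w ^ p = w ^ (p - 1) * w := by
    rw [← rpow_add_one' hw (by linarith), sub_add_cancel]
  rcases le_total v u with hvu | huv
  · have := mul_le_mul_of_nonneg_left hvu (rpow_nonneg hu (p - 1))
    linarith [hsplit u hu, rpow_nonneg hv p]
  · have := mul_le_mul_of_nonneg_right (rpow_le_rpow hu huv (by linarith : 0 ≤ p - 1)) hv
    linarith [hsplit v hv, rpow_nonneg hu p]

lemma rpow_sub_rpow_le_abs_sub_rpow (hp : 0 ≤ p) (hp1 : p ≤ 1) (hu : 0 ≤ u) (hv : 0 ≤ v) :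
    u ^ p - v ^ p ≤ |u - v| ^ p := by
  have : u ^ p ≤ (v + |u - v|) ^ p :=
    rpow_le_rpow hu (by linarith [le_abs_self (u - v)]) hp
  linarith [rpow_add_le_add_rpow hv (abs_nonneg (u - v)) hp hp1]

lemma abs_rpow_sub_rpow_le (hp : 0 ≤ p) (hp1 : p ≤ 1) (hu : 0 ≤ u) (hv : 0 ≤ v) :
    |u ^ p - v ^ p| ≤ |u - v| ^ p := by
  rw [abs_sub_le_iff]
  exact ⟨rpow_sub_rpow_le_abs_sub_rpow hp hp1 hu hv,
    abs_sub_comm u v ▸ rpow_sub_rpow_le_abs_sub_rpow hp hp1 hv hu⟩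

lemma rpow_le_rpow_add_one {s t : ℝ} (hu : 0 ≤ u) (hs : 0 ≤ s) (hst : s ≤ t) :
    u ^ s ≤ u ^ t + 1 := by
  rcases le_total u 1 with h | h
  · linarith [rpow_le_one hu h hs, rpow_nonneg hu t]
  · linarith [rpow_le_rpow_of_exponent_le h hst]

end RpowInequalities

section Drift

variable {p b a x : ℝ}

lemma add_rpow_one_add_le (hp : 0 < p) (ha : 0 ≤ a) (hax : 0 ≤ a + x) :
    (a + x) ^ (1 + p) ≤
      a ^ (1 + p) + (1 + p) * a ^ p * x + (1 + p) * (((a + x) ^ p - a ^ p) * x) := by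
  have := rpow_one_add_sub_rpow_one_add_le hp hax ha
  rw [add_sub_cancel_left] at this
  linarith

theorem exists_drift_bound_of_le_one (hp : 0 < p) (hp1 : p ≤ 1) (hb : 0 < b) :
    ∃ c : ℝ, 0 < c ∧ ∀ a x : ℝ, 0 < a → 0 ≤ a + x →
      (a + x) ^ (1 + p) - b * (a + x) ^ p ≤
        a ^ (1 + p) + (1 + p) * a ^ p * x - b / 2 * a ^ p + c * (|x| ^ (1 + p) + 1) := by
  refine ⟨1 + p + b, by positivity, fun a x ha hax => ?_⟩
  have hdiff : ((a + x) ^ p - a ^ p) * x ≤ |x| ^ (1 + p) := calc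
    _ ≤ |(a + x) ^ p - a ^ p| * |x| := (le_abs_self _).trans (abs_mul _ _).le
    _ ≤ |x| ^ p * |x| := by
      gcongr; simpa using abs_rpow_sub_rpow_le hp.le hp1 hax ha.le
    _ = |x| ^ (1 + p) := by rw [rpow_one_add' (abs_nonneg x) (by linarith), mul_comm]
  have hdrop : a ^ p - (a + x) ^ p ≤ |x| ^ p := by
    simpa using rpow_sub_rpow_le_abs_sub_rpow hp.le hp1 ha.le hax
  have hsmall := rpow_le_rpow_add_one (abs_nonneg x) hp.le (by linarith : p ≤ 1 + p)
  linarith [add_rpow_one_add_le hp ha.le hax,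
    mul_le_mul_of_nonneg_left hdiff (by linarith : 0 ≤ 1 + p),
    mul_le_mul_of_nonneg_left hdrop hb.le, mul_le_mul_of_nonneg_left hsmall hb.le,
    mul_nonneg hb.le (rpow_nonneg ha.le p), rpow_nonneg (abs_nonneg x) (1 + p)]

lemma drift_le_of_abs_le (hp : 1 < p) (hb : 0 ≤ b) (ha : 0 < a) (hx : |x| ≤ a)
    (hhalf : a ^ p ≤ 2 * (a + x) ^ p) :
    (a + x) ^ (1 + p) - b * (a + x) ^ p ≤
      a ^ (1 + p) + (1 + p) * a ^ p * x - b / 2 * a ^ p + a ^ p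
        + ((1 + p) * p * 2 ^ (p - 1)) ^ p * |x| ^ (2 * p) := by
  have hax : 0 ≤ a + x := by linarith [neg_abs_le x]
  have hmax : max (a + x) a ≤ 2 * a := max_le (by linarith [le_abs_self x]) (by linarith)
  have hdiff : ((a + x) ^ p - a ^ p) * x ≤ p * 2 ^ (p - 1) * a ^ (p - 1) * x ^ 2 := calc
    _ = ((a + x) ^ p - a ^ p) * ((a + x) - a) := by ring
    _ ≤ p * max (a + x) a ^ (p - 1) * ((a + x) - a) ^ 2 :=
      rpow_sub_rpow_mul_sub_le hp.le hax ha
    _ ≤ p * (2 * a) ^ (p - 1) * x ^ 2 := by rw [add_sub_cancel_left]; gcongr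
    _ = _ := by rw [mul_rpow zero_le_two ha.le]; ring
  have hyoung := rpow_sub_one_mul_le_rpow_add_rpow hp.le ha.le
    (by positivity : 0 ≤ (1 + p) * p * 2 ^ (p - 1) * x ^ 2)
  have hpow : ((1 + p) * p * 2 ^ (p - 1) * x ^ 2) ^ p =
      ((1 + p) * p * 2 ^ (p - 1)) ^ p * |x| ^ (2 * p) := by
    rw [mul_rpow (by positivity) (sq_nonneg x), rpow_mul (abs_nonneg x), rpow_two, sq_abs]
  linarith [add_rpow_one_add_le (by linarith : 0 < p) ha.le hax,
    mul_le_mul_of_nonneg_left hdiff (by linarith : 0 ≤ 1 + p),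
    mul_le_mul_of_nonneg_left hhalf hb]

lemma drift_le_of_le_mul_abs (hp : 0 < p) (hb : 0 ≤ b) (ha : 0 ≤ a) (hax : 0 ≤ a + x) {k : ℝ}
    (hk : 0 ≤ k) (hak : a ≤ k * |x|) :
    (a + x) ^ (1 + p) - b * (a + x) ^ p ≤
      a ^ (1 + p) + (1 + p) * a ^ p * x - b / 2 * a ^ p
        + ((k + 1) ^ (1 + p) + (1 + p + b / 2) * k ^ p) * (|x| ^ (1 + p) + |x| ^ p) := by
  have hy : (a + x) ^ (1 + p) ≤ (k + 1) ^ (1 + p) * |x| ^ (1 + p) := by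
    rw [← mul_rpow (by linarith) (abs_nonneg x)]
    exact rpow_le_rpow hax (by linarith [le_abs_self x]) (by linarith)
  have hap : a ^ p ≤ k ^ p * |x| ^ p := by
    rw [← mul_rpow hk (abs_nonneg x)]; exact rpow_le_rpow ha hak hp.le
  have hlin : -(a ^ p * x) ≤ k ^ p * |x| ^ (1 + p) := calc
    -(a ^ p * x) ≤ a ^ p * |x| := by
      rw [← mul_neg]; exact mul_le_mul_of_nonneg_left (neg_le_abs x) (rpow_nonneg ha p)
    _ ≤ k ^ p * |x| ^ p * |x| := mul_le_mul_of_nonneg_right hap (abs_nonneg x)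
    _ = _ := by rw [rpow_one_add' (abs_nonneg x) (by linarith)]; ring
  have hkp := rpow_nonneg hk p
  linarith [mul_nonneg hb (rpow_nonneg hax p), rpow_nonneg ha (1 + p),
    mul_le_mul_of_nonneg_left hlin (by linarith : 0 ≤ 1 + p),
    mul_le_mul_of_nonneg_left hap (by linarith : 0 ≤ b / 2),
    mul_nonneg (mul_nonneg hb hkp) (rpow_nonneg (abs_nonneg x) (1 + p)),
    mul_nonneg (rpow_nonneg (by linarith : 0 ≤ k + 1) (1 + p)) (rpow_nonneg (abs_nonneg x) p),
    mul_nonneg (mul_nonneg (by linarith : 0 ≤ 1 + p) hkp) (rpow_nonneg (abs_nonneg x) p)]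

theorem exists_drift_bound_of_one_lt (hp : 1 < p) (hb : 0 < b) :
    ∃ c : ℝ, 0 < c ∧ ∀ a x : ℝ, 0 < a → 0 ≤ a + x →
      (a + x) ^ (1 + p) - b * (a + x) ^ p ≤
        a ^ (1 + p) + (1 + p) * a ^ p * x - b / 2 * a ^ p + a ^ p
          + c * (|x| ^ (2 * p) + 1) := by
  obtain ⟨d, hd0, hd1, hdp⟩ : ∃ d : ℝ, 0 ≤ d ∧ d < 1 ∧ d ^ p = 2⁻¹ :=
    ⟨2⁻¹ ^ p⁻¹, by positivity, rpow_lt_one (by norm_num) (by norm_num) (by positivity),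
      rpow_inv_rpow (by norm_num) (by positivity)⟩
  obtain ⟨k, hk, hkd⟩ : ∃ k : ℝ, 0 ≤ k ∧ k * (1 - d) = 1 :=
    ⟨(1 - d)⁻¹, inv_nonneg.2 (by linarith), inv_mul_cancel₀ (by linarith)⟩
  have hK : 0 ≤ ((1 + p) * p * 2 ^ (p - 1)) ^ p := by positivity
  have hC : 0 ≤ (k + 1) ^ (1 + p) + (1 + p + b / 2) * k ^ p := by positivity
  refine ⟨((1 + p) * p * 2 ^ (p - 1)) ^ p + 2 * ((k + 1) ^ (1 + p) + (1 + p + b / 2) * k ^ p),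
    by positivity, fun a x ha hax => ?_⟩
  have hx2p := rpow_nonneg (abs_nonneg x) (2 * p)
  rcases le_or_gt |x| ((1 - d) * a) with hnear | hfar
  · have hhalf : a ^ p ≤ 2 * (a + x) ^ p := by
      have : (d * a) ^ p ≤ (a + x) ^ p :=
        rpow_le_rpow (by positivity) (by linarith [neg_abs_le x]) (by linarith)
      rw [mul_rpow hd0 ha.le, hdp] at this
      linarith
    have := drift_le_of_abs_le hp hb.le ha (by linarith [mul_nonneg hd0 ha.le]) hhalf
    linarith [mul_nonneg hC (by linarith : 0 ≤ |x| ^ (2 * p) + 1)]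
  · have hak : a ≤ k * |x| := by nlinarith
    have := drift_le_of_le_mul_abs (by linarith : 0 < p) hb.le ha.le hax hk hak
    have h1 := rpow_le_rpow_add_one (abs_nonneg x) (by linarith) (by linarith : 1 + p ≤ 2 * p)
    have h2 := rpow_le_rpow_add_one (abs_nonneg x) (by linarith) (by linarith : p ≤ 2 * p)
    linarith [mul_nonneg hK (by linarith : 0 ≤ |x| ^ (2 * p) + 1), rpow_nonneg ha.le p,
      mul_le_mul_of_nonneg_left (add_le_add h1 h2) hC]

end Drift

/-- Drift power inequality: for `p, b > 0` there is `c_{b,p} > 0` such that for all `a > 0`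
and `x ∈ ℝ` with `a + x ≥ 0`,
`(a+x)^{1+p} − b(a+x)^p ≤ a^{1+p} + (1+p)a^p x − (b/2)a^p + c_{b,p}(|x|^{1+p}+1)` when
`p ≤ 1`, and
`(a+x)^{1+p} − b(a+x)^p ≤ a^{1+p} + (1+p)a^p x − (b/2)a^p + a^p + c_{b,p}(|x|^{2p}+1)`
when `p > 1`. -/
theorem stmt10 (p b : ℝ) (hp : 0 < p) (hb : 0 < b) :
    ∃ c : ℝ, 0 < c ∧ ∀ a x : ℝ, 0 < a → 0 ≤ a + x →
      (p ≤ 1 →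
        (a + x) ^ (1 + p) - b * (a + x) ^ p ≤
          a ^ (1 + p) + (1 + p) * a ^ p * x - b / 2 * a ^ p + c * (|x| ^ (1 + p) + 1)) ∧
      (1 < p →
        (a + x) ^ (1 + p) - b * (a + x) ^ p ≤
          a ^ (1 + p) + (1 + p) * a ^ p * x - b / 2 * a ^ p + a ^ p
            + c * (|x| ^ (2 * p) + 1)) := by
  rcases le_or_gt p 1 with hp1 | hp1
  · obtain ⟨c, hc, hbound⟩ := exists_drift_bound_of_le_one hp hp1 hb
    exact ⟨c, hc, fun a x ha hax =>
      ⟨fun _ => hbound a x ha hax, fun h => absurd h (not_lt.2 hp1)⟩⟩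
  · obtain ⟨c, hc, hbound⟩ := exists_drift_bound_of_one_lt hp1 hb
    exact ⟨c, hc, fun a x ha hax =>
      ⟨fun h => absurd h (not_le.2 hp1), fun _ => hbound a x ha hax⟩⟩
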